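/- arXiv:2306.13868 — 6 statements merged into one kernel-verified Lean document; each statement's English description precedes it below -/
import Mathlib

section
/- Fix m : ℕ and a group g ⊆ {0, …, 2^m − 1}. The total number of pairs (k, j) with 0 ≤ k ≤ m and 0 ≤ j < 2^{m−k} such that the dyadic interval D_{k,j} intersects g is at most ∑_{j=0}^{m} min(|g|, 2^j). In particular, the number of dyadic intervals of {0,…,2^m−1} that intersect g is at most |g|·(m+1). -/
lemma filter_card_le (k : ℕ) (g : Finset ℕ) (N : ℕ) :
    ((Finset.range N).filter
      (fun j => ((Finset.Ico (j * 2 ^ k) ((j + 1) * 2 ^ k)) ∩ g).Nonempty)).card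
    ≤ min g.card N := by
  refine le_min ?_ ?_
  · calc _ ≤ (g.image (fun x => x / 2 ^ k)).card := by
          apply Finset.card_le_card
          intro j hj
          simp only [Finset.mem_filter] at hj
          obtain ⟨x, hx⟩ := hj.2
          simp only [Finset.mem_inter, Finset.mem_Ico] at hx
          refine Finset.mem_image.2 ⟨x, hx.2, ?_⟩
          exact Nat.div_eq_of_lt_le hx.1.1 hx.1.2
       _ ≤ g.card := Finset.card_image_le
  · simpa using Finset.card_filter_le (Finset.range N) _

/-- union bound over ancestor chains.
The total number of pairs `(k, j)` with `k ≤ m`, `j < 2^{m−k}` such that the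
dyadic interval `D_{k,j} = [j·2^k, (j+1)·2^k)` intersects `g ⊆ {0,…,2^m−1}`
is at most `∑_{j=0}^{m} min(|g|, 2^j)`; in particular it is at most
`|g|·(m+1)`. -/
theorem yes_intervals_total_bound
    (m : ℕ) (g : Finset ℕ) (hg : g ⊆ Finset.range (2 ^ m)) :
    (∑ k ∈ Finset.range (m + 1),
        ((Finset.range (2 ^ (m - k))).filter
          (fun j => ((Finset.Ico (j * 2 ^ k) ((j + 1) * 2 ^ k)) ∩ g).Nonempty)).card
      ≤ ∑ j ∈ Finset.range (m + 1), min g.card (2 ^ j))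
    ∧ (∑ k ∈ Finset.range (m + 1),
        ((Finset.range (2 ^ (m - k))).filter
          (fun j => ((Finset.Ico (j * 2 ^ k) ((j + 1) * 2 ^ k)) ∩ g).Nonempty)).card
      ≤ g.card * (m + 1)) := by
  have h1 : (∑ k ∈ Finset.range (m + 1),
        ((Finset.range (2 ^ (m - k))).filter
          (fun j => ((Finset.Ico (j * 2 ^ k) ((j + 1) * 2 ^ k)) ∩ g).Nonempty)).card
      ≤ ∑ j ∈ Finset.range (m + 1), min g.card (2 ^ j)) := by
    have : ∑ j ∈ Finset.range (m + 1), min g.card (2 ^ j)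
        = ∑ k ∈ Finset.range (m + 1), min g.card (2 ^ (m - k)) := by
      rw [← Finset.sum_range_reflect]
      apply Finset.sum_congr rfl
      intro k hk
      simp only [Finset.mem_range] at hk
      have : m + 1 - 1 - k = m - k := by omega
      rw [this]
    rw [this]
    exact Finset.sum_le_sum fun k _ => filter_card_le k g _
  refine ⟨h1, h1.trans ?_⟩
  calc ∑ j ∈ Finset.range (m + 1), min g.card (2 ^ j)
      ≤ ∑ _j ∈ Finset.range (m + 1), g.card :=
        Finset.sum_le_sum fun j _ => min_le_left _ _
    _ = g.card * (m + 1) := by simp [mul_comm]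
end

section
/- (Theorem 1(i), worst-case task bound.) Fix m : ℕ, a coverage threshold τ : ℕ, and a group g ⊆ {0, …, 2^m − 1} with |g| ≤ τ. Let Q(g) be the execution set of the Group-Coverage algorithm: the root interval D_{m,0} together with every dyadic interval D_{k,j}, 0 ≤ k < m, 0 ≤ j < 2^{m−k}, whose parent D_{k+1,⌊j/2⌋} intersects g. Then |Q(g)| ≤ 2·τ·m + 1; that is, on a dataset of size n = 2^m the algorithm issues at most 2τ·log₂ n + 1 set queries, which is Θ(τ log n). -/
/-- Theorem 1(i), worst-case task bound.
For a group `g ⊆ {0,…,2^m−1}` with `|g| ≤ τ`, the execution set of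
Group-Coverage — the root `D_{m,0}` plus every dyadic interval
`D_{k,j}` (`k < m`, `j < 2^{m−k}`) whose parent `D_{k+1,⌊j/2⌋}`
intersects `g` — has size at most `2·τ·m + 1`. -/
theorem group_coverage_task_upper_bound
    (m τ : ℕ) (g : Finset ℕ) (hg : g ⊆ Finset.range (2 ^ m))
    (hτ : g.card ≤ τ) :
    1 + ∑ k ∈ Finset.range m,
        ((Finset.range (2 ^ (m - k))).filter
          (fun j =>
            ((Finset.Ico ((j / 2) * 2 ^ (k + 1)) ((j / 2 + 1) * 2 ^ (k + 1))) ∩ g).Nonempty)).card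
      ≤ 2 * τ * m + 1 := by
  have key : ∀ k ∈ Finset.range m,
      ((Finset.range (2 ^ (m - k))).filter
          (fun j =>
            ((Finset.Ico ((j / 2) * 2 ^ (k + 1)) ((j / 2 + 1) * 2 ^ (k + 1))) ∩ g).Nonempty)).card
        ≤ 2 * τ := by
    intro k _
    have hsub : ((Finset.range (2 ^ (m - k))).filter
          (fun j =>
            ((Finset.Ico ((j / 2) * 2 ^ (k + 1)) ((j / 2 + 1) * 2 ^ (k + 1))) ∩ g).Nonempty))
        ⊆ (g.image (fun x => 2 * (x / 2 ^ (k + 1)))) ∪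
          (g.image (fun x => 2 * (x / 2 ^ (k + 1)) + 1)) := by
      intro j hj
      simp only [Finset.mem_filter] at hj
      obtain ⟨hjr, x, hx⟩ := hj
      simp only [Finset.mem_inter, Finset.mem_Ico] at hx
      obtain ⟨⟨h1, h2⟩, hxg⟩ := hx
      have hdiv : x / 2 ^ (k + 1) = j / 2 := by
        exact Nat.div_eq_of_lt_le h1 (by simpa [add_mul] using h2)
      have : j = 2 * (j / 2) ∨ j = 2 * (j / 2) + 1 := by omega
      rcases this with h | h
      · exact Finset.mem_union_left _ (Finset.mem_image.2 ⟨x, hxg, by omega⟩)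
      · exact Finset.mem_union_right _ (Finset.mem_image.2 ⟨x, hxg, by omega⟩)
    calc _ ≤ _ := Finset.card_le_card hsub
      _ ≤ (g.image (fun x => 2 * (x / 2 ^ (k + 1)))).card +
          (g.image (fun x => 2 * (x / 2 ^ (k + 1)) + 1)).card := Finset.card_union_le _ _
      _ ≤ g.card + g.card :=
          Nat.add_le_add (Finset.card_image_le) (Finset.card_image_le)
      _ ≤ 2 * τ := by omega
  calc 1 + ∑ k ∈ Finset.range m,
        ((Finset.range (2 ^ (m - k))).filter
          (fun j =>
            ((Finset.Ico ((j / 2) * 2 ^ (k + 1)) ((j / 2 + 1) * 2 ^ (k + 1))) ∩ g).Nonempty)).card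
      ≤ 1 + ∑ _k ∈ Finset.range m, 2 * τ := by
        exact Nat.add_le_add_left (Finset.sum_le_sum key) 1
    _ = 2 * τ * m + 1 := by
        simp [Finset.sum_const, Nat.mul_comm, Nat.add_comm]
end

section
/- (Theorem 1(ii), tightness.) Fix m, s : ℕ with s ≤ m, and let g = { i·2^{m−s} : 0 ≤ i < 2^s } ⊆ {0, …, 2^m − 1} be the evenly spaced group of size 2^s. Let Q(g) be the execution set of the Group-Coverage algorithm: the root interval D_{m,0} together with every dyadic interval D_{k,j}, 0 ≤ k < m, 0 ≤ j < 2^{m−k}, whose parent D_{k+1,⌊j/2⌋} intersects g. Then |Q(g)| = 2^{s+1}·(m − s + 1) − 1. Hence with τ − 1 ≈ 2^s uniformly distributed objects of g, the algorithm issues Θ(τ·log(n/τ)) set queries on a dataset of size n = 2^m, so the Θ(τ log n) upper bound is tight. -/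
open Finset

-- periodic counting lemma
lemma count_mod_period (p : ℕ → Prop) [DecidablePred p] (b : ℕ) (a : ℕ) :
    ((range (a * b)).filter (fun j => p (j % b))).card
      = a * ((range b).filter (fun j => p (j % b))).card := by
  induction a with
  | zero => simp
  | succ a ih =>
    rw [Nat.succ_mul, Finset.range_add, filter_union, card_union_of_disjoint, ih]
    · have heq : ((range b).map (addLeftEmbedding (a * b))).filter (fun j => p (j % b))
          = ((range b).filter (fun j => p (j % b))).map (addLeftEmbedding (a * b)) := by
        rw [Finset.filter_map]
        congr 1
        apply Finset.filter_congr
        intro x hx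
        simp only [Function.comp, addLeftEmbedding_apply]
        rw [Nat.add_comm (a * b) x, Nat.add_mul_mod_self_right]
      rw [heq, Finset.card_map]
      ring
    · rw [Finset.disjoint_left]
      intro x hx1 hx2
      simp only [mem_filter, mem_range] at hx1
      simp only [mem_filter, mem_map, addLeftEmbedding_apply, mem_range] at hx2
      obtain ⟨⟨y, hy, rfl⟩, -⟩ := hx2
      omega

lemma count_lt_two (b : ℕ) (hb : 2 ≤ b) :
    ((range b).filter (fun j => j % b < 2)).card = 2 := by
  have : (range b).filter (fun j => j % b < 2) = range 2 := by
    ext x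
    simp only [mem_filter, mem_range]
    constructor
    · rintro ⟨h1, h2⟩; rwa [Nat.mod_eq_of_lt h1] at h2
    · intro h; refine ⟨lt_of_lt_of_le h hb, ?_⟩
      rw [Nat.mod_eq_of_lt (lt_of_lt_of_le h hb)]; exact h
  rw [this, card_range]

lemma sum_geom_tail (m s : ℕ) (hs : s ≤ m) :
    ∑ k ∈ Finset.Ico (m - s) m, 2 ^ (m - k) = 2 ^ (s + 1) - 2 := by
  induction s with
  | zero => simp
  | succ s ih =>
    have h1 : s ≤ m := by omega
    have h2 : m - (s + 1) < m := by omega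
    rw [Finset.sum_eq_sum_Ico_succ_bot h2]
    have h3 : m - (s+1) + 1 = m - s := by omega
    have h4 : m - (m - (s+1)) = s + 1 := by omega
    rw [h3, ih h1, h4]
    have : 2 ≤ 2 ^ (s+1) := by
      have := Nat.one_lt_two_pow (n := s+1) (by omega); omega
    rw [pow_succ]
    omega

lemma cardA (m s k : ℕ) (hs : s ≤ m) (hk1 : m - s ≤ k) (hk2 : k < m) (g : Finset ℕ)
    (hg : g = (range (2 ^ s)).image (fun i => i * 2 ^ (m - s))) :
    ((Finset.range (2 ^ (m - k))).filter
      (fun j =>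
        ((Finset.Ico ((j / 2) * 2 ^ (k + 1)) ((j / 2 + 1) * 2 ^ (k + 1))) ∩ g).Nonempty)).card
      = 2 ^ (m - k) := by
  rw [Finset.filter_true_of_mem, card_range]
  intro j hj
  rw [mem_range] at hj
  refine ⟨(j / 2) * 2 ^ (k + 1), Finset.mem_inter.mpr ⟨?_, ?_⟩⟩
  · rw [Finset.mem_Ico]
    exact ⟨le_refl _, by
      have h0 : (0:ℕ) < 2 ^ (k+1) := Nat.pow_pos (by norm_num)
      exact Nat.mul_lt_mul_of_lt_of_le (by omega) (le_refl _) h0⟩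
  · rw [hg, Finset.mem_image]
    refine ⟨(j / 2) * 2 ^ (k + 1 - (m - s)), ?_, ?_⟩
    · rw [mem_range]
      have hj2 : j / 2 < 2 ^ (m - k - 1) := by
        apply (Nat.div_lt_iff_lt_mul (by norm_num)).mpr
        have : 2 ^ (m - k - 1) * 2 = 2 ^ (m - k) := by
          rw [← pow_succ]; congr 1; omega
        omega
      calc (j / 2) * 2 ^ (k + 1 - (m - s))
          < 2 ^ (m - k - 1) * 2 ^ (k + 1 - (m - s)) := by
            exact Nat.mul_lt_mul_of_lt_of_le hj2 (le_refl _) (Nat.pow_pos (by norm_num))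
        _ = 2 ^ s := by rw [← pow_add]; congr 1; omega
    · rw [mul_assoc, ← pow_add]
      congr 2
      omega

lemma cardB (m s k : ℕ) (hk : k < m - s) (g : Finset ℕ)
    (hg : g = (range (2 ^ s)).image (fun i => i * 2 ^ (m - s))) :
    ∀ j < 2 ^ (m - k),
      (((Finset.Ico ((j / 2) * 2 ^ (k + 1)) ((j / 2 + 1) * 2 ^ (k + 1))) ∩ g).Nonempty
        ↔ j % 2 ^ (m - s - k) < 2) := by
  intro j hj
  constructor
  · rintro ⟨x, hx⟩
    rw [Finset.mem_inter, Finset.mem_Ico, hg, Finset.mem_image] at hx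
    obtain ⟨⟨hx1, hx2⟩, i, hi, rfl⟩ := hx
    rw [mem_range] at hi
    have h1 : 2 ^ (m - s) = 2 ^ (m - s - (k+1)) * 2 ^ (k+1) := by
      rw [← pow_add]; congr 1; omega
    set e := m - s - (k+1) with he
    rw [h1, ← mul_assoc] at hx1 hx2
    have hpos : (0:ℕ) < 2 ^ (k+1) := Nat.pow_pos (by norm_num)
    have hle : j / 2 ≤ i * 2 ^ e := Nat.le_of_mul_le_mul_right hx1 hpos
    have hlt : i * 2 ^ e < j / 2 + 1 := Nat.lt_of_mul_lt_mul_right hx2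
    have hw : j / 2 = i * 2 ^ e := by omega
    have h2 : 2 ^ (m - s - k) = 2 * 2 ^ e := by
      rw [← pow_succ']; congr 1; omega
    have hj2 : j % 2 < 2 := Nat.mod_lt _ (by norm_num)
    have hjeq : j = (2 * 2 ^ e) * i + j % 2 := by
      conv_lhs => rw [← Nat.div_add_mod j 2]
      rw [hw]; ring
    rw [h2, hjeq, Nat.mul_add_mod]
    exact lt_of_le_of_lt (Nat.mod_le _ _) hj2
  · intro h
    set b := 2 ^ (m - s - k) with hbdef
    have hb : b = 2 * 2 ^ (m - s - k - 1) := by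
      rw [hbdef, ← pow_succ']; congr 1; omega
    set e := m - s - k - 1 with he
    have hbpos : 0 < b := Nat.pow_pos (by norm_num)
    have hi : j / b < 2 ^ s := by
      apply (Nat.div_lt_iff_lt_mul hbpos).mpr
      have : 2 ^ s * b = 2 ^ (m - k) := by
        rw [hbdef, ← pow_add]; congr 1; omega
      omega
    have hdiv : j / 2 = (j / b) * 2 ^ e := by
      have h' : j % (2 * 2 ^ e) < 2 := by rw [← hb]; exact h
      conv_lhs => rw [← Nat.div_add_mod j b]
      rw [hb, mul_assoc, Nat.mul_add_div (by norm_num), Nat.div_eq_of_lt h',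
        Nat.add_zero, Nat.mul_comm]
    have hkey : (j / b) * 2 ^ (m - s) = (j / 2) * 2 ^ (k + 1) := by
      have h1 : 2 ^ (m - s) = 2 ^ e * 2 ^ (k+1) := by
        rw [← pow_add]; congr 1; omega
      rw [h1, ← mul_assoc, ← hdiv]
    refine ⟨(j / b) * 2 ^ (m - s), Finset.mem_inter.mpr ⟨?_, ?_⟩⟩
    · rw [Finset.mem_Ico, hkey]
      exact ⟨le_refl _, Nat.mul_lt_mul_of_lt_of_le (by omega) (le_refl _)
        (Nat.pow_pos (by norm_num))⟩
    · rw [hg, Finset.mem_image]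
      exact ⟨j / b, mem_range.mpr hi, rfl⟩

/-- Theorem 1(ii), tightness.
For the evenly spaced group `g = { i·2^{m−s} : i < 2^s }` of size `2^s`
(`s ≤ m`), the execution set of Group-Coverage — the root `D_{m,0}` plus
every dyadic interval `D_{k,j}` (`k < m`, `j < 2^{m−k}`) whose parent
`D_{k+1,⌊j/2⌋}` intersects `g` — has size exactly `2^{s+1}·(m−s+1) − 1`. -/
theorem group_coverage_task_bound_tight
    (m s : ℕ) (hs : s ≤ m)
    (g : Finset ℕ)
    (hg : g = (Finset.range (2 ^ s)).image (fun i => i * 2 ^ (m - s))) :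
    1 + ∑ k ∈ Finset.range m,
        ((Finset.range (2 ^ (m - k))).filter
          (fun j =>
            ((Finset.Ico ((j / 2) * 2 ^ (k + 1)) ((j / 2 + 1) * 2 ^ (k + 1))) ∩ g).Nonempty)).card
      = 2 ^ (s + 1) * (m - s + 1) - 1 := by
  have hcard : ∀ k ∈ Finset.range m,
      ((Finset.range (2 ^ (m - k))).filter
        (fun j =>
          ((Finset.Ico ((j / 2) * 2 ^ (k + 1)) ((j / 2 + 1) * 2 ^ (k + 1))) ∩ g).Nonempty)).card
      = if k < m - s then 2 ^ (s + 1) else 2 ^ (m - k) := by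
    intro k hk
    rw [mem_range] at hk
    by_cases hcase : k < m - s
    · rw [if_pos hcase]
      have hcong : (Finset.range (2 ^ (m - k))).filter
          (fun j =>
            ((Finset.Ico ((j / 2) * 2 ^ (k + 1)) ((j / 2 + 1) * 2 ^ (k + 1))) ∩ g).Nonempty)
          = (Finset.range (2 ^ (m - k))).filter
              (fun j => (fun t => t < 2) (j % 2 ^ (m - s - k))) := by
        apply Finset.filter_congr
        intro j hj
        rw [mem_range] at hj
        simp only [eq_iff_iff]
        exact cardB m s k hcase g hg j hj
      have hmk : 2 ^ (m - k) = 2 ^ s * 2 ^ (m - s - k) := by rw [← pow_add]; congr 1; omega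
      rw [hcong, hmk, count_mod_period (fun t => t < 2) (2 ^ (m - s - k)) (2 ^ s),
        count_lt_two _ (by
          have := Nat.one_lt_two_pow (n := m - s - k) (by omega); omega),
        ← pow_succ]
    · rw [if_neg hcase]
      exact cardA m s k hs (by omega) hk g hg
  rw [Finset.sum_congr rfl hcard]
  rw [Finset.range_eq_Ico, ← Finset.sum_Ico_consecutive _ (Nat.zero_le (m - s)) (Nat.sub_le m s)]
  have h1 : ∑ k ∈ Finset.Ico 0 (m - s), (if k < m - s then 2 ^ (s + 1) else 2 ^ (m - k))
      = (m - s) * 2 ^ (s + 1) := by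
    rw [Finset.sum_congr rfl (fun k hk => if_pos (by rw [Finset.mem_Ico] at hk; omega))]
    simp [mul_comm]
  have h2 : ∑ k ∈ Finset.Ico (m - s) m, (if k < m - s then 2 ^ (s + 1) else 2 ^ (m - k))
      = 2 ^ (s + 1) - 2 := by
    rw [Finset.sum_congr rfl (fun k hk => if_neg (by rw [Finset.mem_Ico] at hk; omega))]
    exact sum_geom_tail m s hs
  rw [h1, h2]
  have hA : 2 ≤ 2 ^ (s + 1) := by
    have := Nat.one_lt_two_pow (n := s + 1) (by omega); omega
  have hmul : 2 ^ (s + 1) * (m - s + 1) = (m - s) * 2 ^ (s + 1) + 2 ^ (s + 1) := by ring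
  omega
end

section
/- Fix m, s : ℕ with s ≤ m, and let g = { i·2^{m−s} : 0 ≤ i < 2^s } ⊆ {0, …, 2^m − 1} be the evenly spaced group of size 2^s. Then the total number of pairs (k, j) with 0 ≤ k ≤ m and 0 ≤ j < 2^{m−k} such that the dyadic interval D_{k,j} intersects g is exactly (m − s + 2)·2^s − 1. Equivalently, for each level k, the number of level-k dyadic intervals intersecting g equals min(2^s, 2^{m−k}). -/
private lemma two_pow_sum (n : ℕ) : ∑ k ∈ Finset.range n, 2 ^ k = 2 ^ n - 1 := by
  induction n with
  | zero => simp
  | succ n ih =>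
    rw [Finset.sum_range_succ, ih, pow_succ]
    have : 1 ≤ 2 ^ n := Nat.one_le_two_pow
    omega

private lemma sum_min_pow (s t : ℕ) :
    ∑ k ∈ Finset.range (s + t + 1), min (2 ^ s) (2 ^ k) + 1 = (t + 2) * 2 ^ s := by
  induction t with
  | zero =>
    have h : ∀ k ∈ Finset.range (s + 1), min (2 ^ s) (2 ^ k) = 2 ^ k := by
      intro k hk
      rw [Finset.mem_range] at hk
      exact min_eq_right (Nat.pow_le_pow_right (by norm_num) (by omega))
    rw [Finset.sum_congr rfl h, two_pow_sum, pow_succ]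
    have : 1 ≤ 2 ^ s := Nat.one_le_two_pow
    omega
  | succ t ih =>
    have h : s + (t + 1) + 1 = (s + t + 1) + 1 := by omega
    rw [h, Finset.sum_range_succ,
      min_eq_left (Nat.pow_le_pow_right (by norm_num) (by omega)),
      show (t + 1 + 2) * 2 ^ s = (t + 2) * 2 ^ s + 2 ^ s from by ring]
    omega

private lemma level_count (m s k : ℕ) (hs : s ≤ m) (hk : k ≤ m) :
    ((Finset.range (2 ^ (m - k))).filter
        (fun j => ((Finset.Ico (j * 2 ^ k) ((j + 1) * 2 ^ k)) ∩
          ((Finset.range (2 ^ s)).image (fun i => i * 2 ^ (m - s)))).Nonempty)).card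
      = min (2 ^ s) (2 ^ (m - k)) := by
  rcases le_or_gt k (m - s) with hcase | hcase
  · -- sparse case: each interval contains at most one point; count = 2^s
    have hd : m - s = (m - s - k) + k := by omega
    have hmk : m - k = s + (m - s - k) := by omega
    have hfil : ((Finset.range (2 ^ (m - k))).filter
        (fun j => ((Finset.Ico (j * 2 ^ k) ((j + 1) * 2 ^ k)) ∩
          ((Finset.range (2 ^ s)).image (fun i => i * 2 ^ (m - s)))).Nonempty))
        = (Finset.range (2 ^ s)).image (fun i => i * 2 ^ (m - s - k)) := by
      ext j
      rw [Finset.mem_filter]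
      simp only [Finset.mem_filter, Finset.mem_range, Finset.mem_image, Finset.Nonempty,
        Finset.mem_inter, Finset.mem_Ico]
      constructor
      · rintro ⟨hj, x, ⟨hx1, hx2⟩, i, hi, rfl⟩
        refine ⟨i, hi, ?_⟩
        have h1 : j * 2 ^ k ≤ i * 2 ^ (m - s - k) * 2 ^ k := by
          rw [mul_assoc, ← pow_add, ← hd]; exact hx1
        have h2 : i * 2 ^ (m - s - k) * 2 ^ k < (j + 1) * 2 ^ k := by
          rw [mul_assoc, ← pow_add, ← hd]; exact hx2
        have hp : 0 < 2 ^ k := Nat.pow_pos (by norm_num)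
        have := Nat.le_of_mul_le_mul_right h1 hp
        have := Nat.lt_of_mul_lt_mul_right h2
        omega
      · rintro ⟨i, hi, rfl⟩
        refine ⟨?_, i * 2 ^ (m - s), ⟨?_, ?_⟩, i, hi, rfl⟩
        · calc i * 2 ^ (m - s - k) < 2 ^ s * 2 ^ (m - s - k) :=
            (Nat.mul_lt_mul_right (Nat.pow_pos (by norm_num))).mpr hi
          _ = 2 ^ (m - k) := by rw [← pow_add, hmk]
        · apply le_of_eq
          rw [mul_assoc, ← pow_add]
          congr 2
          omega
        · have heq : i * 2 ^ (m - s - k) * 2 ^ k = i * 2 ^ (m - s) := by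
            rw [mul_assoc, ← pow_add]
            congr 2
            omega
          rw [add_mul, one_mul, heq]
          have : 0 < 2 ^ k := Nat.pow_pos (by norm_num)
          omega
    rw [hfil, Finset.card_image_of_injective _
        (fun a b h => Nat.eq_of_mul_eq_mul_right (Nat.pow_pos (by norm_num)) h),
      Finset.card_range]
    exact (min_eq_left (Nat.pow_le_pow_right (by norm_num) (by omega))).symm
  · -- dense case: every interval intersects; count = 2^(m-k)
    have he : k = (m - s) + (k - (m - s)) := by omega
    have hfil : ((Finset.range (2 ^ (m - k))).filter
        (fun j => ((Finset.Ico (j * 2 ^ k) ((j + 1) * 2 ^ k)) ∩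
          ((Finset.range (2 ^ s)).image (fun i => i * 2 ^ (m - s)))).Nonempty))
        = Finset.range (2 ^ (m - k)) := by
      apply Finset.filter_true_of_mem
      intro j hj
      rw [Finset.mem_range] at hj
      refine ⟨j * 2 ^ k, Finset.mem_inter.mpr ⟨Finset.mem_Ico.mpr ⟨le_refl _, ?_⟩,
        Finset.mem_image.mpr ⟨j * 2 ^ (k - (m - s)), ?_, ?_⟩⟩⟩
      · exact (Nat.mul_lt_mul_right (Nat.pow_pos (by norm_num))).mpr (by omega)
      · rw [Finset.mem_range]
        calc j * 2 ^ (k - (m - s)) < 2 ^ (m - k) * 2 ^ (k - (m - s)) :=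
            (Nat.mul_lt_mul_right (Nat.pow_pos (by norm_num))).mpr hj
          _ = 2 ^ s := by rw [← pow_add]; congr 1; omega
      · rw [mul_assoc, ← pow_add]; congr 2; omega
    rw [hfil, Finset.card_range]
    exact (min_eq_right (Nat.pow_le_pow_right (by norm_num) (by omega))).symm

/-- counting computation for the adversarial example.
For the evenly spaced group `g = { i·2^{m−s} : i < 2^s }` (`s ≤ m`), the total
number of pairs `(k, j)` with `k ≤ m`, `j < 2^{m−k}` such that the dyadic
interval `D_{k,j}` intersects `g` is exactly `(m − s + 2)·2^s − 1`;
equivalently, for each level `k ≤ m` the number of level-`k` dyadic intervals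
intersecting `g` equals `min(2^s, 2^{m−k})`. -/
theorem evenly_spaced_yes_interval_count
    (m s : ℕ) (hs : s ≤ m)
    (g : Finset ℕ)
    (hg : g = (Finset.range (2 ^ s)).image (fun i => i * 2 ^ (m - s))) :
    (∑ k ∈ Finset.range (m + 1),
        ((Finset.range (2 ^ (m - k))).filter
          (fun j => ((Finset.Ico (j * 2 ^ k) ((j + 1) * 2 ^ k)) ∩ g).Nonempty)).card
      = (m - s + 2) * 2 ^ s - 1)
    ∧ (∀ k ≤ m,
        ((Finset.range (2 ^ (m - k))).filter
          (fun j => ((Finset.Ico (j * 2 ^ k) ((j + 1) * 2 ^ k)) ∩ g).Nonempty)).card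
        = min (2 ^ s) (2 ^ (m - k))) := by
  subst hg
  constructor
  · have hcongr : ∀ k ∈ Finset.range (m + 1),
        ((Finset.range (2 ^ (m - k))).filter
          (fun j => ((Finset.Ico (j * 2 ^ k) ((j + 1) * 2 ^ k)) ∩
            ((Finset.range (2 ^ s)).image (fun i => i * 2 ^ (m - s)))).Nonempty)).card
        = min (2 ^ s) (2 ^ (m - k)) := by
      intro k hk
      rw [Finset.mem_range] at hk
      exact level_count m s k hs (by omega)
    rw [Finset.sum_congr rfl hcongr]
    have hre : ∑ k ∈ Finset.range (m + 1), min (2 ^ s) (2 ^ (m - k))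
        = ∑ k ∈ Finset.range (m + 1), min (2 ^ s) (2 ^ k) := by
      rw [← Finset.sum_range_reflect]
      apply Finset.sum_congr rfl
      intro k hk
      rw [Finset.mem_range] at hk
      congr 2
      omega
    rw [hre]
    have h := sum_min_pow s (m - s)
    have hm : s + (m - s) + 1 = m + 1 := by omega
    rw [hm] at h
    rw [← h, Nat.add_sub_cancel]
  · intro k hk
    exact level_count m s k hs hk
end

section
/- (Case II: a single minority object.) Fix m : ℕ and x with 0 ≤ x < 2^m, and let g = {x}. Let Q(g) be the execution set of the Group-Coverage algorithm: the root interval D_{m,0} together with every dyadic interval D_{k,j}, 0 ≤ k < m, 0 ≤ j < 2^{m−k}, whose parent D_{k+1,⌊j/2⌋} intersects g. Then |Q(g)| = 2m + 1; that is, when exactly one object of the group is present among n = 2^m objects, the algorithm issues exactly 2·log₂ n + 1 = Θ(log n) set queries. -/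
/-- Case II: a single minority object.
For `g = {x}` with `x < 2^m`, the execution set of Group-Coverage — the root
`D_{m,0}` plus every dyadic interval `D_{k,j}` (`k < m`, `j < 2^{m−k}`) whose
parent `D_{k+1,⌊j/2⌋}` intersects `g` — has size exactly `2m + 1`. -/
theorem group_coverage_single_object
    (m x : ℕ) (hx : x < 2 ^ m) :
    1 + ∑ k ∈ Finset.range m,
        ((Finset.range (2 ^ (m - k))).filter
          (fun j =>
            ((Finset.Ico ((j / 2) * 2 ^ (k + 1)) ((j / 2 + 1) * 2 ^ (k + 1))) ∩ ({x} : Finset ℕ)).Nonempty)).card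
      = 2 * m + 1 := by
  have key : ∀ k ∈ Finset.range m,
      ((Finset.range (2 ^ (m - k))).filter
        (fun j =>
          ((Finset.Ico ((j / 2) * 2 ^ (k + 1)) ((j / 2 + 1) * 2 ^ (k + 1))) ∩ ({x} : Finset ℕ)).Nonempty)).card = 2 := by
    intro k hk
    rw [Finset.mem_range] at hk
    set q := x / 2 ^ (k + 1) with hq
    have hpos : 0 < 2 ^ (k + 1) := Nat.pow_pos (by norm_num)
    have hqb : 2 * q + 1 < 2 ^ (m - k) := by
      have h1 : x < 2 ^ (m - k - 1) * 2 ^ (k + 1) := by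
        rw [← pow_add]
        have : m - k - 1 + (k + 1) = m := by omega
        rw [this]; exact hx
      have h2 : q < 2 ^ (m - k - 1) := Nat.div_lt_of_lt_mul (by rwa [mul_comm] at h1)
      have h3 : 2 ^ (m - k) = 2 * 2 ^ (m - k - 1) := by
        rw [← pow_succ']
        congr 1
        omega
      omega
    have hcond : ∀ j, ((Finset.Ico ((j / 2) * 2 ^ (k + 1)) ((j / 2 + 1) * 2 ^ (k + 1))) ∩ ({x} : Finset ℕ)).Nonempty ↔ j / 2 = q := by
      intro j
      constructor
      · rintro ⟨y, hy⟩
        simp only [Finset.mem_inter, Finset.mem_Ico, Finset.mem_singleton] at hy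
        obtain ⟨⟨h1, h2⟩, rfl⟩ := hy
        rw [hq]
        exact (Nat.div_eq_of_lt_le h1 h2).symm
      · intro hj
        refine ⟨x, ?_⟩
        simp only [Finset.mem_inter, Finset.mem_Ico, Finset.mem_singleton, hj]
        refine ⟨⟨Nat.div_mul_le_self x _, ?_⟩, trivial⟩
        rw [hq]
        exact (Nat.div_lt_iff_lt_mul hpos).mp (Nat.lt_succ_self q)
    have hset : ((Finset.range (2 ^ (m - k))).filter
        (fun j =>
          ((Finset.Ico ((j / 2) * 2 ^ (k + 1)) ((j / 2 + 1) * 2 ^ (k + 1))) ∩ ({x} : Finset ℕ)).Nonempty))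
        = {2 * q, 2 * q + 1} := by
      ext j
      simp only [Finset.mem_filter, Finset.mem_range, hcond, Finset.mem_insert, Finset.mem_singleton]
      omega
    rw [hset]
    rw [Finset.card_insert_of_notMem (by simp), Finset.card_singleton]
  rw [Finset.sum_congr rfl key, Finset.sum_const, Finset.card_range, smul_eq_mul]
  omega
end

section
/- (Lemma 2, cost analysis with bounded set-query size.) Fix m, q, τ : ℕ and a group g ⊆ {0, …, q·2^m − 1} with |g| ≤ τ. Partition the dataset into q blocks B_i = [i·2^m, (i+1)·2^m), 0 ≤ i < q, each of size n = 2^m. Let the execution set consist of the q block roots B_0, …, B_{q−1} together with, inside each block, every dyadic subinterval of level k < m whose parent interval (within that block) intersects g. Then the size of the execution set is at most q + 2·τ·m; that is, on a dataset of size N = q·2^m with set-query size bound n = 2^m, the Group-Coverage algorithm generates at most N/n + 2τ·log₂ n = Θ(N/n + τ log n) set queries. -/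
lemma gc_key (m q k : ℕ) (hk : k < m) (g : Finset ℕ) :
    ∑ i ∈ Finset.range q,
        ((Finset.range (2 ^ (m - k))).filter
          (fun j =>
            ((Finset.Ico (i * 2 ^ m + (j / 2) * 2 ^ (k + 1))
                (i * 2 ^ m + (j / 2 + 1) * 2 ^ (k + 1))) ∩ g).Nonempty)).card
      ≤ 2 * g.card := by
  classical
  rw [← Finset.card_sigma]
  have h2 : 2 * g.card = (g ×ˢ Finset.range 2).card := by
    simp [Finset.card_product, mul_comm]
  rw [h2]
  apply Finset.card_le_card_of_injOn
    (fun p => (WithTop.untopD 0 ((Finset.Ico (p.1 * 2 ^ m + (p.2 / 2) * 2 ^ (k + 1))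
        (p.1 * 2 ^ m + (p.2 / 2 + 1) * 2 ^ (k + 1))) ∩ g).min, p.2 % 2))
  · rintro ⟨i, j⟩ hp
    simp only [Finset.mem_coe, Finset.mem_sigma, Finset.mem_range, Finset.mem_filter] at hp
    obtain ⟨hi, hj, hne⟩ := hp
    have hmem := Finset.min'_mem _ hne
    simp only [Finset.mem_coe]
    rw [← Finset.coe_min' hne, WithTop.untopD_coe]
    simp only [Finset.mem_product, Finset.mem_range]
    exact ⟨(Finset.mem_inter.mp hmem).2, Nat.mod_lt _ (by norm_num)⟩
  · rintro ⟨i, j⟩ hp ⟨i', j'⟩ hp' heq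
    simp only [Finset.mem_coe, Finset.mem_sigma, Finset.mem_range, Finset.mem_filter] at hp hp'
    obtain ⟨hi, hj, hne⟩ := hp
    obtain ⟨hi', hj', hne'⟩ := hp'
    simp only [Prod.mk.injEq] at heq
    rw [← Finset.coe_min' hne, ← Finset.coe_min' hne'] at heq
    obtain ⟨hx, hmod⟩ := heq
    simp only [WithTop.untopD_coe, WithTop.coe_inj] at hx
    -- the common element
    set x := Finset.min' _ hne with hxdef
    have hmem := Finset.min'_mem _ hne
    have hmem' := Finset.min'_mem _ hne'
    rw [← hx] at hmem'
    have hb : ∀ (i j : ℕ), j < 2 ^ (m - k) →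
        x ∈ Finset.Ico (i * 2 ^ m + (j / 2) * 2 ^ (k + 1))
          (i * 2 ^ m + (j / 2 + 1) * 2 ^ (k + 1)) →
        i = x / 2 ^ m ∧ j / 2 = (x - i * 2 ^ m) / 2 ^ (k + 1) := by
      intro i j hj hxmem
      rw [Finset.mem_Ico] at hxmem
      obtain ⟨hlo, hhi⟩ := hxmem
      have hdiv : j / 2 < 2 ^ (m - k - 1) := by
        rw [Nat.div_lt_iff_lt_mul (by norm_num)]
        calc j < 2 ^ (m - k) := hj
        _ = 2 ^ (m - k - 1) * 2 := by
            rw [← pow_succ]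
            congr 1
            omega
      have hsub : (j / 2 + 1) * 2 ^ (k + 1) ≤ 2 ^ m := by
        calc (j / 2 + 1) * 2 ^ (k + 1) ≤ 2 ^ (m - k - 1) * 2 ^ (k + 1) := by
              exact Nat.mul_le_mul_right _ hdiv
        _ = 2 ^ m := by rw [← pow_add]; congr 1; omega
      have hlo2 : i * 2 ^ m ≤ x := le_trans (Nat.le_add_right _ _) hlo
      have hhi2 : x < (i + 1) * 2 ^ m := by
        calc x < i * 2 ^ m + (j / 2 + 1) * 2 ^ (k + 1) := hhi
        _ ≤ i * 2 ^ m + 2 ^ m := by omega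
        _ = (i + 1) * 2 ^ m := by ring
      constructor
      · exact (Nat.div_eq_of_lt_le hlo2 hhi2).symm
      · refine (Nat.div_eq_of_lt_le ?_ ?_).symm <;> omega
    obtain ⟨e1, e2⟩ := hb i j hj (Finset.mem_inter.mp hmem).1
    obtain ⟨e1', e2'⟩ := hb i' j' hj' (Finset.mem_inter.mp hmem').1
    have hii : i = i' := e1.trans e1'.symm
    have hjj : j = j' := by
      have : j / 2 = j' / 2 := by rw [e2, e2', hii]
      omega
    subst hii; subst hjj; rfl

/-- Lemma 2, cost analysis with bounded set-query size.
The dataset `{0,…,q·2^m−1}` is split into `q` blocks of size `2^m`. The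
execution set consists of the `q` block roots plus, in each block `i`, every
dyadic subinterval of level `k < m` whose parent (within the block,
`[i·2^m + ⌊j/2⌋·2^{k+1}, i·2^m + (⌊j/2⌋+1)·2^{k+1})`) intersects `g`.
If `|g| ≤ τ`, the execution set has size at most `q + 2·τ·m`. -/
theorem group_coverage_blocked_cost
    (m q τ : ℕ) (g : Finset ℕ) (hg : g ⊆ Finset.range (q * 2 ^ m))
    (hτ : g.card ≤ τ) :
    q + ∑ i ∈ Finset.range q, ∑ k ∈ Finset.range m,
        ((Finset.range (2 ^ (m - k))).filter
          (fun j =>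
            ((Finset.Ico (i * 2 ^ m + (j / 2) * 2 ^ (k + 1))
                (i * 2 ^ m + (j / 2 + 1) * 2 ^ (k + 1))) ∩ g).Nonempty)).card
      ≤ q + 2 * τ * m := by
  apply Nat.add_le_add_left
  rw [Finset.sum_comm]
  calc ∑ k ∈ Finset.range m, ∑ i ∈ Finset.range q,
        ((Finset.range (2 ^ (m - k))).filter
          (fun j =>
            ((Finset.Ico (i * 2 ^ m + (j / 2) * 2 ^ (k + 1))
                (i * 2 ^ m + (j / 2 + 1) * 2 ^ (k + 1))) ∩ g).Nonempty)).card
      ≤ ∑ k ∈ Finset.range m, 2 * τ := by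
        apply Finset.sum_le_sum
        intro k hk
        exact le_trans (gc_key m q k (Finset.mem_range.mp hk) g)
          (Nat.mul_le_mul_left 2 hτ)
  _ = 2 * τ * m := by simp [mul_comm]
end
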